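/- arXiv:2308.12653 — 4 statements merged into one kernel-verified Lean document; each statement's English description precedes it below -/
import Mathlib

section
/- Let G be an undirected graph with a conservative edge-weight function w (no cycle has negative total weight), and let E⁻ be the set of edges of negative weight. If W is a closed walk in G that does not traverse any edge of E⁻ more than once, then the total weight of W (counting multiplicities) is non-negative. -/
open SimpleGraph

/-- The total weight of a walk, counting edges with multiplicity. -/
def walkWeight {V : Type*} (G : SimpleGraph V) (w : Sym2 V → ℝ) {u v : V}
    (p : G.Walk u v) : ℝ :=
  (p.edges.map w).sum

/-- A weight function is conservative if every cycle has non-negative total weight. -/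
def Conservative {V : Type*} (G : SimpleGraph V) (w : Sym2 V → ℝ) : Prop :=
  ∀ (v : V) (c : G.Walk v v), c.IsCycle → 0 ≤ walkWeight G w c

/-- A closed walk with nodup support-tail is nil. -/
lemma closed_nodup_nil {V : Type*} {G : SimpleGraph V} {u : V} (p : G.Walk u u)
    (hp : p.support.Nodup) : p = SimpleGraph.Walk.nil := by
  cases p with
  | nil => rfl
  | cons h q =>
    exfalso
    rw [SimpleGraph.Walk.support_cons, List.nodup_cons] at hp
    exact hp.1 q.end_mem_support

/-- Extraction: from any walk whose support is not nodup, we can extract a minimal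
closed subwalk `c` and a strictly shorter remaining walk `q` whose edges together
are a permutation of the original walk's edges. -/
lemma extract_min_closed {V : Type*} [DecidableEq V] {G : SimpleGraph V} :
    ∀ (n : ℕ) {a b : V} (p : G.Walk a b), p.length ≤ n → ¬ p.support.Nodup →
    ∃ (u : V) (c : G.Walk u u) (q : G.Walk a b),
      c.support.tail.Nodup ∧ 0 < c.length ∧ q.length < p.length ∧
      p.edges.Perm (c.edges ++ q.edges) := by
  intro n
  induction n with
  | zero =>
    intro a b p hlen hnd
    cases p with
    | nil => exact absurd (by simp) hnd
    | cons h q => simp [SimpleGraph.Walk.length_cons] at hlen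
  | succ n ih =>
    intro a b p hlen hnd
    cases p with
    | nil => exact absurd (by simp) hnd
    | cons h q =>
      rename_i x
      by_cases hax : a ∈ q.support
      · set t := q.takeUntil a hax with ht
        set d := q.dropUntil a hax with hd
        have hspec : t.append d = q := q.take_spec hax
        have hql : q.length = t.length + d.length := by
          rw [← hspec, SimpleGraph.Walk.length_append]
        by_cases hts : t.support.Nodup
        · refine ⟨a, SimpleGraph.Walk.cons h t, d, ?_, by simp, ?_, ?_⟩
          · simpa [SimpleGraph.Walk.support_cons] using hts
          · simp only [SimpleGraph.Walk.length_cons]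
            omega
          · rw [SimpleGraph.Walk.edges_cons, ← hspec, SimpleGraph.Walk.edges_append,
              SimpleGraph.Walk.edges_cons]
            exact List.Perm.refl _
        · have htn : t.length ≤ n := by
            have h1 : t.length ≤ q.length := q.length_takeUntil_le hax
            simp only [SimpleGraph.Walk.length_cons] at hlen
            omega
          obtain ⟨u, c, q', hc1, hc2, hc3, hc4⟩ := ih t htn hts
          refine ⟨u, c, SimpleGraph.Walk.cons h (q'.append d), hc1, hc2, ?_, ?_⟩
          · simp only [SimpleGraph.Walk.length_cons, SimpleGraph.Walk.length_append]
            omega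
          · rw [SimpleGraph.Walk.edges_cons, ← hspec, SimpleGraph.Walk.edges_append,
              SimpleGraph.Walk.edges_cons, SimpleGraph.Walk.edges_append]
            have step1 : (s(a, x) :: (t.edges ++ d.edges)).Perm
                (s(a, x) :: (c.edges ++ (q'.edges ++ d.edges))) := by
              refine List.Perm.cons _ ?_
              rw [← List.append_assoc]
              exact hc4.append_right _
            exact step1.trans List.perm_middle.symm
      · have hq : ¬ q.support.Nodup := by
          intro hqn
          apply hnd
          rw [SimpleGraph.Walk.support_cons, List.nodup_cons]
          exact ⟨hax, hqn⟩
        have hqn : q.length ≤ n := by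
          simp only [SimpleGraph.Walk.length_cons] at hlen; omega
        obtain ⟨u, c, q', hc1, hc2, hc3, hc4⟩ := ih q hqn hq
        refine ⟨u, c, SimpleGraph.Walk.cons h q', hc1, hc2, ?_, ?_⟩
        · simp only [SimpleGraph.Walk.length_cons]; omega
        · rw [SimpleGraph.Walk.edges_cons, SimpleGraph.Walk.edges_cons]
          exact (List.Perm.cons _ hc4).trans List.perm_middle.symm

/-- A minimal closed walk (support tail nodup) has non-negative weight, provided
any edge repeated in it has non-negative weight. -/
lemma min_closed_nonneg {V : Type*} [DecidableEq V] {G : SimpleGraph V} {w : Sym2 V → ℝ}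
    (hw : Conservative G w) {u y : V} (h : G.Adj u y) (p : G.Walk y u)
    (hnd : p.support.Nodup)
    (hcnt : ∀ e ∈ (SimpleGraph.Walk.cons h p).edges,
      2 ≤ (SimpleGraph.Walk.cons h p).edges.count e → 0 ≤ w e) :
    0 ≤ walkWeight G w (SimpleGraph.Walk.cons h p) := by
  by_cases he : s(u, y) ∈ p.edges
  · -- the backtrack case: p must be the single edge y-u
    cases p with
    | nil => simp at he
    | cons h2 p2 =>
      rename_i z
      rw [SimpleGraph.Walk.support_cons, List.nodup_cons] at hnd
      rw [SimpleGraph.Walk.edges_cons, List.mem_cons] at he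
      rcases he with he | he
      · -- s(u,y) = s(y,z), so z = u
        have hz : u = z := by
          rw [Sym2.eq_iff] at he
          rcases he with ⟨h1, _⟩ | ⟨h1, _⟩
          · exact absurd h1 h.ne
          · exact h1
        subst hz
        have hp2 : p2 = SimpleGraph.Walk.nil := closed_nodup_nil p2 hnd.2
        subst hp2
        have hedges : (SimpleGraph.Walk.cons h (SimpleGraph.Walk.cons h2
            SimpleGraph.Walk.nil)).edges = [s(u, y), s(u, y)] := by
          simp [Sym2.eq_swap]
        have hwe : 0 ≤ w s(u, y) := by
          apply hcnt s(u, y) (by rw [hedges]; simp)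
          rw [hedges]; simp
        simp only [walkWeight, hedges]
        simp only [List.map_cons, List.map_nil, List.sum_cons, List.sum_nil, add_zero]
        linarith
      · exfalso
        have : y ∈ p2.support := SimpleGraph.Walk.snd_mem_support_of_mem_edges p2 he
        exact hnd.1 this
  · have hcyc : (SimpleGraph.Walk.cons h p).IsCycle := by
      rw [SimpleGraph.Walk.cons_isCycle_iff]
      exact ⟨by rw [SimpleGraph.Walk.isPath_def]; exact hnd, he⟩
    exact hw u _ hcyc

lemma closed_walk_weight_nonneg_aux {V : Type*} [DecidableEq V]
    (G : SimpleGraph V) (w : Sym2 V → ℝ) (hw : Conservative G w) :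
    ∀ (n : ℕ) (v : V) (W : G.Walk v v), W.length ≤ n →
    (∀ e ∈ W.edges, w e < 0 → W.edges.count e ≤ 1) →
    0 ≤ walkWeight G w W := by
  intro n
  induction n with
  | zero =>
    intro v W hlen _
    cases W with
    | nil => simp [walkWeight]
    | cons h q => simp [SimpleGraph.Walk.length_cons] at hlen
  | succ n ih =>
    intro v W hlen hneg
    cases W with
    | nil => simp [walkWeight]
    | cons h q =>
      rename_i x
      set W : G.Walk v v := SimpleGraph.Walk.cons h q with hW
      have hnd : ¬ W.support.Nodup := by
        rw [hW, SimpleGraph.Walk.support_cons, List.nodup_cons]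
        intro ⟨h1, _⟩
        exact h1 q.end_mem_support
      obtain ⟨u, c, q', hc1, hc2, hc3, hc4⟩ :=
        extract_min_closed (n + 1) W hlen hnd
      -- weight splits
      have hsum : walkWeight G w W = walkWeight G w c + walkWeight G w q' := by
        unfold walkWeight
        rw [(hc4.map w).sum_eq, List.map_append, List.sum_append]
      have hcount : ∀ e, W.edges.count e = c.edges.count e + q'.edges.count e := by
        intro e
        rw [hc4.count_eq, List.count_append]
      have hmem : ∀ e, e ∈ c.edges ∨ e ∈ q'.edges → e ∈ W.edges := by
        intro e hor
        rw [hc4.mem_iff, List.mem_append]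
        exact hor
      have hcw : 0 ≤ walkWeight G w c := by
        have hcnt' : ∀ e ∈ c.edges, 2 ≤ c.edges.count e → 0 ≤ w e := by
          intro e hec hcnt
          by_contra hwe
          push_neg at hwe
          have := hneg e (hmem e (Or.inl hec)) hwe
          have := hcount e
          omega
        cases c with
        | nil => simp at hc2
        | cons hadj p =>
          rw [SimpleGraph.Walk.support_cons, List.tail_cons] at hc1
          exact min_closed_nonneg hw hadj p hc1 hcnt'
      have hqw : 0 ≤ walkWeight G w q' := by
        apply ih v q' (by omega)
        intro e heq hwe
        have h1 := hneg e (hmem e (Or.inr heq)) hwe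
        have h2 := hcount e
        omega
      linarith

/-- If `W` is a closed walk that does not traverse any negative-weight edge more than
once, then its total weight (with multiplicities) is non-negative. -/
theorem closed_walk_weight_nonneg {V : Type*} [DecidableEq V]
    (G : SimpleGraph V) (w : Sym2 V → ℝ) (hw : Conservative G w)
    (v : V) (W : G.Walk v v)
    (hneg : ∀ e ∈ W.edges, w e < 0 → W.edges.count e ≤ 1) :
    0 ≤ walkWeight G w W := by
  exact closed_walk_weight_nonneg_aux G w hw W.length v W le_rfl hneg
end

section
/- Let T be a tree (an acyclic connected edge set) in a graph G with conservative weight function w, all of whose edges have negative weight, and suppose every negative-weight edge of G lies in T. If x and y are distinct vertices of T and Q is a walk from x to y in G that uses no negative-weight edge more than once, then w(Q) ≥ w(T[x,y]), where T[x,y] is the unique path in T from x to y. -/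
open SimpleGraph

/-- The subgraph of `G` spanned by the negative-weight edges; by hypothesis below it
forms a single tree `T`. -/
def negSub {V : Type*} (G : SimpleGraph V) (w : Sym2 V → ℝ) : SimpleGraph V where
  Adj u v := G.Adj u v ∧ w s(u, v) < 0
  symm := ⟨fun u v ⟨h, hwuv⟩ => ⟨h.symm, by rwa [Sym2.eq_swap]⟩⟩
  loopless := ⟨fun u ⟨h, _⟩ => G.loopless.irrefl u h⟩

section Aux

variable {V : Type*} [DecidableEq V] {G : SimpleGraph V} {w : Sym2 V → ℝ}

lemma wt_append {u v x : V} (p : G.Walk u v) (q : G.Walk v x) :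
    walkWeight G w (p.append q) = walkWeight G w p + walkWeight G w q := by
  simp [walkWeight]

lemma wt_cons {u v x : V} (h : G.Adj u v) (p : G.Walk v x) :
    walkWeight G w (Walk.cons h p) = w s(u, v) + walkWeight G w p := by
  simp [walkWeight]

/-- A path from `u` to `v` containing the edge `s(u,v)` is that single edge. -/
lemma path_single {u v : V} (r : G.Walk u v) (hnd : r.support.Nodup)
    (he : s(u, v) ∈ r.edges) : ∃ h : G.Adj u v, r = Walk.cons h Walk.nil := by
  cases r with
  | nil => simp at he
  | @cons _ b _ h r' =>
    rw [Walk.edges_cons, List.mem_cons] at he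
    rw [Walk.support_cons, List.nodup_cons] at hnd
    rcases he with he | he
    · have hvb : v = b := Sym2.congr_right.mp he
      subst hvb
      cases r' with
      | nil => exact ⟨h, rfl⟩
      | cons h2 r2 =>
        exfalso
        have := hnd.2
        rw [Walk.support_cons, List.nodup_cons] at this
        exact this.1 r2.end_mem_support
    · exact absurd (r'.fst_mem_support_of_mem_edges he) hnd.1

lemma split_at_edge {x y : V} (Q : G.Walk x y) (e : Sym2 V) (he : e ∈ Q.edges) :
    ∃ (u u' : V) (h : G.Adj u u') (Q₁ : G.Walk x u) (Q₂ : G.Walk u' y),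
      e = s(u, u') ∧ Q = Q₁.append (Walk.cons h Q₂) := by
  induction Q with
  | nil => simp at he
  | cons h Q' ih =>
    rw [Walk.edges_cons, List.mem_cons] at he
    rcases he with rfl | he
    · exact ⟨_, _, h, Walk.nil, Q', rfl, rfl⟩
    · obtain ⟨u, u', h2, Q₁, Q₂, heq, hQ⟩ := ih he
      exact ⟨u, u', h2, Walk.cons h Q₁, Q₂, heq, by rw [hQ, Walk.cons_append]⟩

/-- A closed walk using each negative edge at most once has nonnegative weight. -/
lemma closed_nonneg (hw : Conservative G w) :
    ∀ (n : ℕ) (v : V) (c : G.Walk v v), c.length ≤ n →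
      (∀ e ∈ c.edges, w e < 0 → c.edges.count e ≤ 1) → 0 ≤ walkWeight G w c := by
  intro n
  induction n with
  | zero =>
    intro v c hlen _
    have h0 : c.edges = [] := List.length_eq_zero_iff.mp (by rw [Walk.length_edges]; omega)
    simp [walkWeight, h0]
  | succ n ih =>
    intro v c hlen hcnt
    by_cases hnd : c.support.tail.Nodup
    · cases c with
      | nil => simp [walkWeight]
      | @cons _ u _ h r =>
        rw [Walk.support_cons, List.tail_cons] at hnd
        by_cases her : s(v, u) ∈ r.edges
        · -- r is the single edge u-v; the doubled edge must be nonnegative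
          obtain ⟨h', rfl⟩ := path_single r hnd (by rwa [Sym2.eq_swap])
          have hsw : s(u, v) = s(v, u) := Sym2.eq_swap
          have hcount : (Walk.cons h (Walk.cons h' Walk.nil)).edges.count s(v, u) = 2 := by
            simp [Walk.edges_cons, Walk.edges_nil, hsw, List.count_cons]
          have hnneg : 0 ≤ w s(v, u) := by
            by_contra hlt
            push_neg at hlt
            have := hcnt s(v, u) (by simp [Walk.edges_cons]) hlt
            omega
          have hwt : walkWeight G w (Walk.cons h (Walk.cons h' Walk.nil))
              = w s(v, u) + w s(u, v) := by simp [walkWeight]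
          rw [hwt, hsw]
          linarith
        · have hcyc : (Walk.cons h r).IsCycle :=
            (Walk.cons_isCycle_iff r h).mpr ⟨(Walk.isPath_def r).mpr hnd, her⟩
          exact hw v _ hcyc
    · -- split at a repeated vertex
      obtain ⟨u₀, hu₀⟩ := List.exists_duplicate_iff_not_nodup.mpr hnd
      rw [List.duplicate_iff_two_le_count] at hu₀
      have hu₀m : u₀ ∈ c.support :=
        List.mem_of_mem_tail (List.count_pos_iff.mp (by omega))
      have hperm : (c.rotate u₀ hu₀m).edges.Perm c.edges := (Walk.rotate_edges c u₀ hu₀m).perm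
      have hcnt' : 2 ≤ (c.rotate u₀ hu₀m).support.tail.count u₀ := by
        rwa [(Walk.support_rotate c u₀ hu₀m).perm.count_eq]
      revert hperm hcnt'
      generalize c.rotate u₀ hu₀m = c'
      intro hperm hcnt'
      cases c' with
      | nil => simp at hcnt'
      | @cons _ b _ hadj r' =>
        rw [Walk.support_cons, List.tail_cons] at hcnt'
        have hu₀r : u₀ ∈ r'.support := List.count_pos_iff.mp (by omega)
        have hspec := r'.take_spec hu₀r
        set t := r'.takeUntil u₀ hu₀r with ht
        set d := r'.dropUntil u₀ hu₀r with hd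
        have hct : t.support.count u₀ = 1 := r'.count_support_takeUntil_eq_one hu₀r
        have hdpos : 1 ≤ d.length := by
          by_contra hcon
          push_neg at hcon
          have hd0 : d.length = 0 := by omega
          have htail : d.support.tail = [] := by
            apply List.length_eq_zero_iff.mp
            rw [List.length_tail, Walk.length_support]
            omega
          rw [← hspec, Walk.support_append, List.count_append, htail] at hcnt'
          simp [hct] at hcnt'
        have hedgeeq : (Walk.cons hadj r').edges = (Walk.cons hadj t).edges ++ d.edges := by
          rw [← hspec]
          simp [Walk.edges_append, Walk.edges_cons]
        have hedges : c.edges.Perm ((Walk.cons hadj t).edges ++ d.edges) := by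
          rw [← hedgeeq]
          exact hperm.symm
        have hlenc : c.length = (t.length + 1) + d.length := by
          have h2 := hedges.length_eq
          rw [List.length_append] at h2
          simp only [Walk.length_edges, Walk.length_cons] at h2
          omega
        have key : ∀ {a : V} (q : G.Walk a a), q.length ≤ n →
            (∀ e ∈ q.edges, q.edges.count e ≤ c.edges.count e) →
            0 ≤ walkWeight G w q := by
          intro a q hql hqc
          refine ih a q hql (fun e hee hlt => ?_)
          have h1 := hqc e hee
          have h2 : e ∈ c.edges := by
            have h3 : 0 < q.edges.count e := List.count_pos_iff.mpr hee
            exact List.count_pos_iff.mp (by omega)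
          have := hcnt e h2 hlt
          omega
        have hC₁ : 0 ≤ walkWeight G w (Walk.cons hadj t) := by
          refine key (Walk.cons hadj t) (by rw [Walk.length_cons]; omega) (fun e hee => ?_)
          rw [hedges.count_eq, List.count_append]
          omega
        have hD : 0 ≤ walkWeight G w d := by
          refine key d (by omega) (fun e hee => ?_)
          rw [hedges.count_eq, List.count_append]
          omega
        have hsum : walkWeight G w c
            = walkWeight G w (Walk.cons hadj t) + walkWeight G w d := by
          unfold walkWeight
          rw [(hedges.map w).sum_eq, List.map_append, List.sum_append]
        rw [hsum]
        linarith

lemma main_lemma (hw : Conservative G w) :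
    ∀ (n : ℕ) (x y : V) (Q : G.Walk x y),
      (∀ e ∈ Q.edges, w e < 0 → Q.edges.count e ≤ 1) →
      ∀ (p : (negSub G w).Walk x y), Q.length + 2 * p.length ≤ n →
      walkWeight (negSub G w) w p ≤ walkWeight G w Q := by
  intro n
  induction n with
  | zero =>
    intro x y Q hQ p hlen
    have h0 : Q.edges = [] := List.length_eq_zero_iff.mp (by rw [Walk.length_edges]; omega)
    have h1 : p.edges = [] := List.length_eq_zero_iff.mp (by rw [Walk.length_edges]; omega)
    simp [walkWeight, h0, h1]
  | succ n ih =>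
    intro x y Q hQ p hlen
    cases p with
    | nil =>
      have h0 : walkWeight (negSub G w) w (Walk.nil : (negSub G w).Walk x x) = 0 := by
        simp [walkWeight]
      rw [h0]
      exact closed_nonneg hw Q.length x Q le_rfl hQ
    | @cons _ a _ h p' =>
      have hGxa : G.Adj x a := (show G.Adj x a ∧ w s(x, a) < 0 from h).1
      have hneg₁ : w s(x, a) < 0 := (show G.Adj x a ∧ w s(x, a) < 0 from h).2
      by_cases he : s(x, a) ∈ Q.edges
      · obtain ⟨u, u', hadj, Q₁, Q₂, heq, rfl⟩ := split_at_edge Q _ he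
        have hQedges : (Q₁.append (Walk.cons hadj Q₂)).edges
            = Q₁.edges ++ s(u, u') :: Q₂.edges := by
          rw [Walk.edges_append, Walk.edges_cons]
        have hQlen : (Q₁.append (Walk.cons hadj Q₂)).length
            = Q₁.length + (Q₂.length + 1) := by
          rw [Walk.length_append, Walk.length_cons]
        have hwtQ : walkWeight G w (Q₁.append (Walk.cons hadj Q₂))
            = walkWeight G w Q₁ + (w s(u, u') + walkWeight G w Q₂) := by
          rw [wt_append, wt_cons]
        rcases Sym2.eq_iff.mp heq with ⟨rfl, rfl⟩ | ⟨hxu', hau⟩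
        · -- the traversal of the edge goes x → a
          have h1 : 0 ≤ walkWeight G w Q₁ := by
            refine closed_nonneg hw Q₁.length x Q₁ le_rfl (fun e hee hlt => ?_)
            have hein : e ∈ (Q₁.append (Walk.cons hadj Q₂)).edges := by
              rw [hQedges]; exact List.mem_append_left _ hee
            have hc := hQ e hein hlt
            rw [hQedges, List.count_append] at hc
            omega
          have h2 : walkWeight (negSub G w) w p' ≤ walkWeight G w Q₂ := by
            refine ih a y Q₂ (fun e hee hlt => ?_) p' ?_
            · have hein : e ∈ (Q₁.append (Walk.cons hadj Q₂)).edges := by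
                rw [hQedges]
                exact List.mem_append_right _ (List.mem_cons_of_mem _ hee)
              have hc := hQ e hein hlt
              rw [hQedges, List.count_append, List.count_cons] at hc
              omega
            · rw [hQlen, Walk.length_cons] at hlen
              omega
          rw [wt_cons, hwtQ]
          linarith
        · -- the traversal of the edge goes a → x
          subst hxu'; subst hau
          have hsw : s(a, x) = s(x, a) := Sym2.eq_swap
          have h1 : 0 ≤ walkWeight G w Q₁ + w s(a, x) := by
            have hc := closed_nonneg hw (Q₁.append (Walk.cons hadj Walk.nil)).length x
              (Q₁.append (Walk.cons hadj Walk.nil)) le_rfl ?_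
            · rw [wt_append, wt_cons] at hc
              simpa [walkWeight] using hc
            · intro e hee hlt
              have hce : (Q₁.append (Walk.cons hadj Walk.nil)).edges
                  = Q₁.edges ++ [s(a, x)] := by
                rw [Walk.edges_append, Walk.edges_cons, Walk.edges_nil]
              rw [hce] at hee ⊢
              have hmem : e ∈ (Q₁.append (Walk.cons hadj Q₂)).edges := by
                rw [hQedges]
                rcases List.mem_append.mp hee with h' | h'
                · exact List.mem_append_left _ h'
                · simp only [List.mem_singleton] at h'
                  subst h'
                  rw [hsw]
                  exact List.mem_append_right _ List.mem_cons_self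
              have hcQ := hQ e hmem hlt
              rw [hQedges, List.count_append] at hcQ
              rw [List.count_append]
              have hsub : [s(a, x)].count e ≤ (s(a, x) :: Q₂.edges).count e :=
                List.Sublist.count_le e ((List.nil_sublist Q₂.edges).cons₂ s(a, x))
              omega
          have h2 : walkWeight (negSub G w) w (Walk.cons h p') ≤ walkWeight G w Q₂ := by
            refine ih x y Q₂ (fun e hee hlt => ?_) (Walk.cons h p') ?_
            · have hein : e ∈ (Q₁.append (Walk.cons hadj Q₂)).edges := by
                rw [hQedges]
                exact List.mem_append_right _ (List.mem_cons_of_mem _ hee)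
              have hc := hQ e hein hlt
              rw [hQedges, List.count_append, List.count_cons] at hc
              omega
            · rw [Walk.length_cons]
              rw [hQlen, Walk.length_cons] at hlen
              omega
          rw [hwtQ]
          have hw2 : w s(a, x) = w s(x, a) := by rw [hsw]
          linarith
      · -- the first edge of p is not used by Q: prepend it to Q
        have hsw : s(a, x) = s(x, a) := Sym2.eq_swap
        have hQ' : ∀ e ∈ (Walk.cons hGxa.symm Q).edges, w e < 0 →
            (Walk.cons hGxa.symm Q).edges.count e ≤ 1 := by
          intro e hee hlt
          rw [Walk.edges_cons] at hee ⊢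
          by_cases heq : e = s(a, x)
          · subst heq
            rw [List.count_cons_self]
            have h0 : Q.edges.count s(a, x) = 0 :=
              List.count_eq_zero.mpr (by rw [hsw]; exact he)
            omega
          · rw [List.count_cons_of_ne (Ne.symm heq)]
            have hmem : e ∈ Q.edges := by
              rcases List.mem_cons.mp hee with h' | h'
              · exact absurd h' heq
              · exact h'
            exact hQ e hmem hlt
        have h2 : walkWeight (negSub G w) w p' ≤ walkWeight G w (Walk.cons hGxa.symm Q) := by
          refine ih a y (Walk.cons hGxa.symm Q) hQ' p' ?_
          rw [Walk.length_cons]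
          rw [Walk.length_cons] at hlen
          omega
        rw [wt_cons] at h2 ⊢
        have hw2 : w s(a, x) = w s(x, a) := by rw [hsw]
        linarith

end Aux

/-- Let `T` be the tree formed by the negative edges of `G` (`w` conservative).  If `x`
and `y` are distinct vertices of `T` and `Q` is an `(x,y)`-walk using no negative edge
more than once, then `w(Q) ≥ w(T[x,y])`, where `T[x,y]` is the unique path in `T`
from `x` to `y`. -/
theorem walk_weight_ge_tree_path {V : Type*} [DecidableEq V]
    (G : SimpleGraph V) (w : Sym2 V → ℝ) (hw : Conservative G w)
    (htree : ∀ a b : V, (∃ x, (negSub G w).Adj a x) → (∃ y, (negSub G w).Adj b y) →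
      (negSub G w).Reachable a b)
    {x y : V} (hxy : x ≠ y)
    (hx : ∃ a, (negSub G w).Adj x a) (hy : ∃ b, (negSub G w).Adj y b)
    (Q : G.Walk x y)
    (hneg : ∀ e ∈ Q.edges, w e < 0 → Q.edges.count e ≤ 1)
    (p : (negSub G w).Walk x y) (hp : p.IsPath) :
    walkWeight (negSub G w) w p ≤ walkWeight G w Q :=
  main_lemma hw (Q.length + 2 * p.length) x y Q hneg p le_rfl
end

section
/- Let Q be an odd (s,t)-path in a graph G, and let M_Q consist of: the edges of Q at odd positions taken in G, the copies (in a disjoint copy G' of G) of the edges of Q at even positions, and for every vertex v not on Q the connector edge vv'. Then M_Q is a perfect matching of the graph H formed from G and G' by adding all connector edges vv' and deleting s' and t', and w(M_Q) = w(Q) where connector edges have weight 0 and copies inherit original weights. -/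
open SimpleGraph

/-- Vertex type of the doubled graph: the original vertices (`inl`) together with the
copies `v'` of all vertices other than `s` and `t` (the copies `s'`, `t'` are deleted). -/
def Vd (V : Type*) (s t : V) : Type _ := V ⊕ {u : V // u ≠ s ∧ u ≠ t}

/-- Projection of the doubled graph's vertices back to `V`. -/
def projd {V : Type*} (s t : V) : Vd V s t → V := Sum.elim id Subtype.val

/-- The copy map `v ↦ v'` (junk value `inl v` when `v ∈ {s,t}`). -/
def copyd {V : Type*} [DecidableEq V] (s t : V) (u : V) : Vd V s t :=
  if h : u ≠ s ∧ u ≠ t then Sum.inr ⟨u, h⟩ else Sum.inl u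

/-- The doubled graph `H`: `G` together with a disjoint copy `G'` (with `s'`, `t'`
deleted) and a connector edge `v v'` for every vertex `v ∉ {s,t}`. -/
def doubled {V : Type*} (G : SimpleGraph V) (s t : V) : SimpleGraph (Vd V s t) where
  Adj x y :=
    match x, y with
    | Sum.inl u, Sum.inl v => G.Adj u v
    | Sum.inr u, Sum.inr v => G.Adj u.val v.val
    | Sum.inl u, Sum.inr v => u = v.val
    | Sum.inr u, Sum.inl v => u.val = v
  symm := ⟨by
    rintro (u | u) (v | v) h <;> simp_all [SimpleGraph.adj_comm, eq_comm]⟩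
  loopless := ⟨by
    rintro (u | u) h <;> simp_all⟩

/-- Weights on the doubled graph: copies inherit original weights, connector edges get
weight `0`. -/
def doubledWeight {V : Type*} [DecidableEq V] (w : Sym2 V → ℝ) (s t : V)
    (e : Sym2 (Vd V s t)) : ℝ :=
  if (e.map (projd s t)).IsDiag then 0 else w (e.map (projd s t))

/-- The matching associated with an odd `(s,t)`-path `Q`: edges of `Q` at odd positions
(taken in `G`), copies of the edges of `Q` at even positions, and connector edges `v v'`
for every vertex `v` not on `Q`.  (The edge with index `i` has position `i + 1`.) -/
def matchingOfPath {V : Type*} [DecidableEq V] (G : SimpleGraph V) (s t : V)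
    (Q : G.Walk s t) : Set (Sym2 (Vd V s t)) :=
  ((fun e => Sym2.map (Sum.inl : V → Vd V s t) e) ''
      {e | ∃ i : Fin Q.edges.length, Even (i : ℕ) ∧ Q.edges.get i = e})
  ∪ ((fun e => Sym2.map (copyd s t) e) ''
      {e | ∃ i : Fin Q.edges.length, Odd (i : ℕ) ∧ Q.edges.get i = e})
  ∪ {e | ∃ u : V, u ∉ Q.support ∧ e = s(Sum.inl u, copyd s t u)}


section AuxLemmas

lemma aux_edges_get {V : Type*} {G : SimpleGraph V} {u v : V} (p : G.Walk u v) :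
    ∀ (i : Fin p.edges.length), p.edges.get i = s(p.getVert i, p.getVert (i+1)) := by
  induction p with
  | nil => exact fun i => absurd i.2 (by simp)
  | @cons a b c hadj q ih =>
    rintro ⟨i, hi⟩
    match i with
    | 0 => simp [Walk.getVert_zero, Walk.getVert_cons_succ]
    | (n+1) =>
      have := ih ⟨n, by simpa [Nat.succ_lt_succ_iff] using hi⟩
      simpa [Walk.getVert_cons_succ] using this

lemma aux_getVert_inj {V : Type*} {G : SimpleGraph V} {u v : V} {p : G.Walk u v}
    (hp : p.IsPath) : ∀ i j, i ≤ p.length → j ≤ p.length →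
    p.getVert i = p.getVert j → i = j := by
  induction p with
  | nil => intro i j hi hj _; simp at hi hj; omega
  | @cons a b c hadj q ih =>
    rw [Walk.cons_isPath_iff] at hp
    intro i j hi hj hij
    match i, j with
    | 0, 0 => rfl
    | 0, (j+1) =>
      exfalso; apply hp.2
      rw [Walk.mem_support_iff_exists_getVert]
      exact ⟨j, by simpa [Walk.getVert_cons_succ] using hij.symm, by simpa using hj⟩
    | (i+1), 0 =>
      exfalso; apply hp.2
      rw [Walk.mem_support_iff_exists_getVert]
      exact ⟨i, by simpa [Walk.getVert_cons_succ] using hij, by simpa using hi⟩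
    | (i+1), (j+1) =>
      have := ih hp.1 i j (by simpa using hi) (by simpa using hj)
        (by simpa [Walk.getVert_cons_succ] using hij)
      omega

lemma aux_copyd_eq {V : Type*} [DecidableEq V] {s t u : V} (h : u ≠ s ∧ u ≠ t) :
    copyd s t u = Sum.inr ⟨u, h⟩ := dif_pos h

lemma aux_projd_copyd {V : Type*} [DecidableEq V] (s t : V) :
    projd s t ∘ copyd s t = id := by
  funext u
  simp only [Function.comp_apply, copyd, id]
  by_cases h : u ≠ s ∧ u ≠ t <;> simp [h, projd]

lemma aux_copyd_inj {V : Type*} [DecidableEq V] (s t : V) :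
    Function.Injective (copyd s t) :=
  Function.LeftInverse.injective (g := projd s t) (fun u => congrFun (aux_projd_copyd s t) u)

lemma aux_adj_inl {V : Type*} {G : SimpleGraph V} {s t a b : V} (h : G.Adj a b) :
    (doubled G s t).Adj (Sum.inl a) (Sum.inl b) := h

lemma aux_adj_inr {V : Type*} {G : SimpleGraph V} {s t : V}
    {a b : {u : V // u ≠ s ∧ u ≠ t}} (h : G.Adj a.val b.val) :
    (doubled G s t).Adj (Sum.inr a) (Sum.inr b) := h

lemma aux_adj_conn {V : Type*} {G : SimpleGraph V} {s t : V}
    {a : V} {b : {u : V // u ≠ s ∧ u ≠ t}} (h : a = b.val) :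
    (doubled G s t).Adj (Sum.inl a) (Sum.inr b) := h

lemma aux_mem_matching {V : Type*} [DecidableEq V] {G : SimpleGraph V} {s t : V}
    {Q : G.Walk s t} (e : Sym2 (Vd V s t)) :
    e ∈ matchingOfPath G s t Q ↔
      (∃ i : ℕ, i < Q.length ∧ i % 2 = 0 ∧
        e = s(Sum.inl (Q.getVert i), Sum.inl (Q.getVert (i+1)))) ∨
      (∃ i : ℕ, i < Q.length ∧ i % 2 = 1 ∧
        e = s(copyd s t (Q.getVert i), copyd s t (Q.getVert (i+1)))) ∨
      (∃ u : V, u ∉ Q.support ∧ e = s(Sum.inl u, copyd s t u)) := by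
  simp only [matchingOfPath, Set.mem_union, Set.mem_image, Set.mem_setOf_eq]
  constructor
  · rintro ((⟨e', ⟨i, hev, hget⟩, rfl⟩ | ⟨e', ⟨i, hodd, hget⟩, rfl⟩) | h)
    · refine Or.inl ⟨i, by simpa using i.2, Nat.even_iff.mp hev, ?_⟩
      erw [← hget, aux_edges_get Q i, Sym2.map_pair_eq]
      try rfl
    · refine Or.inr (Or.inl ⟨i, by simpa using i.2, Nat.odd_iff.mp hodd, ?_⟩)
      rw [← hget, aux_edges_get Q i, Sym2.map_pair_eq]
      try rfl
    · exact Or.inr (Or.inr h)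
  · rintro (⟨i, hi, hev, rfl⟩ | ⟨i, hi, hodd, rfl⟩ | h)
    · refine Or.inl (Or.inl ⟨s(Q.getVert i, Q.getVert (i+1)),
        ⟨⟨i, by simpa using hi⟩, Nat.even_iff.mpr hev, aux_edges_get Q _⟩, ?_⟩)
      erw [Sym2.map_pair_eq]
      try rfl
    · exact Or.inl (Or.inr ⟨s(Q.getVert i, Q.getVert (i+1)),
        ⟨⟨i, by simpa using hi⟩, Nat.odd_iff.mpr hodd, aux_edges_get Q _⟩,
        by rw [Sym2.map_pair_eq]⟩)
    · exact Or.inr h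

end AuxLemmas

/-- For an odd `(s,t)`-path `Q`, the set `M_Q` is a perfect matching of the doubled
graph `H`, of weight `w(Q)`. -/
theorem matchingOfPath_isPerfectMatching {V : Type*} [Fintype V] [DecidableEq V]
    (G : SimpleGraph V) (w : Sym2 V → ℝ) (s t : V) (hst : s ≠ t)
    (Q : G.Walk s t) (hQ : Q.IsPath) (hodd : Odd Q.length) :
    matchingOfPath G s t Q ⊆ (doubled G s t).edgeSet ∧
    (∀ v : Vd V s t, ∃! e, e ∈ matchingOfPath G s t Q ∧ v ∈ e) ∧
    ∑ᶠ e ∈ matchingOfPath G s t Q, doubledWeight w s t e = walkWeight G w Q := by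
  classical
  set n := Q.length with hn
  have hnodd : n % 2 = 1 := Nat.odd_iff.mp hodd
  have hInj : ∀ {i j : ℕ}, i ≤ n → j ≤ n → Q.getVert i = Q.getVert j → i = j :=
    fun hi hj h => aux_getVert_inj hQ _ _ hi hj h
  have hgv0 : Q.getVert 0 = s := Q.getVert_zero
  have hgvn : Q.getVert n = t := Q.getVert_length
  have hmem_gv : ∀ i, i ≤ n → Q.getVert i ∈ Q.support := fun i hi =>
    Walk.mem_support_iff_exists_getVert.mpr ⟨i, rfl, hi⟩
  have hmid : ∀ j, 1 ≤ j → j < n → Q.getVert j ≠ s ∧ Q.getVert j ≠ t := by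
    intro j h1 h2
    constructor
    · intro h
      have := hInj (le_of_lt h2) (Nat.zero_le n) (h.trans hgv0.symm)
      omega
    · intro h
      have := hInj (le_of_lt h2) le_rfl (h.trans hgvn.symm)
      omega
  have hOdd1 : ∀ i, i < n → i % 2 = 1 → Q.getVert i ≠ s ∧ Q.getVert i ≠ t :=
    fun i hi hp => hmid i (by omega) (by omega)
  have hOdd2 : ∀ i, i < n → i % 2 = 1 → Q.getVert (i+1) ≠ s ∧ Q.getVert (i+1) ≠ t :=
    fun i hi hp => hmid (i+1) (by omega) (by omega)
  have hnots : ∀ u, u ∉ Q.support → u ≠ s ∧ u ≠ t := fun u hu =>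
    ⟨fun h => hu (h ▸ Q.start_mem_support), fun h => hu (h ▸ Q.end_mem_support)⟩
  refine ⟨?_, ?_, ?_⟩
  · -- subset of edge set
    intro e he
    rw [aux_mem_matching] at he
    rcases he with ⟨i, hi, hp, rfl⟩ | ⟨i, hi, hp, rfl⟩ | ⟨u, hu, rfl⟩
    · exact (doubled G s t).mem_edgeSet.mpr (aux_adj_inl (Q.adj_getVert_succ hi))
    · rw [aux_copyd_eq (hOdd1 i hi hp), aux_copyd_eq (hOdd2 i hi hp)]
      exact (doubled G s t).mem_edgeSet.mpr (aux_adj_inr (Q.adj_getVert_succ hi))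
    · rw [aux_copyd_eq (hnots u hu)]
      exact (doubled G s t).mem_edgeSet.mpr (aux_adj_conn rfl)
  · -- perfect matching
    rintro (u | ⟨u, hu⟩)
    · by_cases hus : u ∈ Q.support
      · obtain ⟨j, hgvj, hj⟩ := Walk.mem_support_iff_exists_getVert.mp hus
        obtain ⟨i₀, hi₀lt, hi₀ev, hjor⟩ :
            ∃ i₀, i₀ < n ∧ i₀ % 2 = 0 ∧ (j = i₀ ∨ j = i₀ + 1) := by
          rcases Nat.even_or_odd j with hje | hjo
          · rw [Nat.even_iff] at hje
            exact ⟨j, by omega, by omega, Or.inl rfl⟩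
          · rw [Nat.odd_iff] at hjo
            exact ⟨j - 1, by omega, by omega, Or.inr (by omega)⟩
        refine ⟨s(Sum.inl (Q.getVert i₀), Sum.inl (Q.getVert (i₀+1))),
          ⟨(aux_mem_matching _).mpr (Or.inl ⟨i₀, hi₀lt, hi₀ev, rfl⟩), ?_⟩, ?_⟩
        · erw [Sym2.mem_iff]
          rcases hjor with h | h
          · exact Or.inl (by rw [← hgvj, h])
          · exact Or.inr (by rw [← hgvj, h])
        · rintro e ⟨he, hv⟩
          rw [aux_mem_matching] at he
          rcases he with ⟨i, hi, hp, rfl⟩ | ⟨i, hi, hp, rfl⟩ | ⟨a, ha, rfl⟩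
          · erw [Sym2.mem_iff] at hv
            have hji : j = i ∨ j = i + 1 := by
              rcases hv with h | h
              · exact Or.inl (hInj hj (by omega) (hgvj.trans (Sum.inl_injective h)))
              · exact Or.inr (hInj hj (by omega) (hgvj.trans (Sum.inl_injective h)))
            have : i = i₀ := by omega
            rw [this]
            try rfl
          · exfalso
            erw [aux_copyd_eq (hOdd1 i hi hp), aux_copyd_eq (hOdd2 i hi hp),
              Sym2.mem_iff] at hv
            rcases hv with h | h <;> exact Sum.inl_ne_inr h
          · exfalso
            erw [aux_copyd_eq (hnots a ha), Sym2.mem_iff] at hv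
            rcases hv with h | h
            · exact ha (Sum.inl_injective h ▸ hus)
            · exact Sum.inl_ne_inr h
      · refine ⟨s(Sum.inl u, copyd s t u),
          ⟨(aux_mem_matching _).mpr (Or.inr (Or.inr ⟨u, hus, rfl⟩)),
            Sym2.mem_iff.mpr (Or.inl rfl)⟩, ?_⟩
        rintro e ⟨he, hv⟩
        rw [aux_mem_matching] at he
        rcases he with ⟨i, hi, hp, rfl⟩ | ⟨i, hi, hp, rfl⟩ | ⟨a, ha, rfl⟩
        · exfalso
          erw [Sym2.mem_iff] at hv
          rcases hv with h | h
          · exact hus (Sum.inl_injective h ▸ hmem_gv i (by omega))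
          · exact hus (Sum.inl_injective h ▸ hmem_gv (i+1) (by omega))
        · exfalso
          erw [aux_copyd_eq (hOdd1 i hi hp), aux_copyd_eq (hOdd2 i hi hp),
            Sym2.mem_iff] at hv
          rcases hv with h | h <;> exact Sum.inl_ne_inr h
        · erw [aux_copyd_eq (hnots a ha), Sym2.mem_iff] at hv
          rcases hv with h | h
          · rw [Sum.inl_injective h]
            try rfl
          · exact absurd h (by simp)
    · by_cases hus : u ∈ Q.support
      · obtain ⟨j, hgvj, hj⟩ := Walk.mem_support_iff_exists_getVert.mp hus
        have hj0 : j ≠ 0 := fun h => hu.1 (by rw [← hgvj, h, hgv0])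
        have hjn : j ≠ n := fun h => hu.2 (by rw [← hgvj, h, hgvn])
        obtain ⟨i₀, hi₀lt, hi₀od, hjor⟩ :
            ∃ i₀, i₀ < n ∧ i₀ % 2 = 1 ∧ (j = i₀ ∨ j = i₀ + 1) := by
          rcases Nat.even_or_odd j with hje | hjo
          · rw [Nat.even_iff] at hje
            exact ⟨j - 1, by omega, by omega, Or.inr (by omega)⟩
          · rw [Nat.odd_iff] at hjo
            exact ⟨j, by omega, by omega, Or.inl rfl⟩
        refine ⟨s(copyd s t (Q.getVert i₀), copyd s t (Q.getVert (i₀+1))),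
          ⟨(aux_mem_matching _).mpr (Or.inr (Or.inl ⟨i₀, hi₀lt, hi₀od, rfl⟩)), ?_⟩, ?_⟩
        · erw [Sym2.mem_iff]
          rcases hjor with h | h
          · refine Or.inl ?_
            have hgi : Q.getVert i₀ = u := by rw [← h, hgvj]
            rw [hgi, aux_copyd_eq hu]
          · refine Or.inr ?_
            have hgi : Q.getVert (i₀+1) = u := by rw [← h, hgvj]
            rw [hgi, aux_copyd_eq hu]
        · rintro e ⟨he, hv⟩
          rw [aux_mem_matching] at he
          rcases he with ⟨i, hi, hp, rfl⟩ | ⟨i, hi, hp, rfl⟩ | ⟨a, ha, rfl⟩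
          · exfalso
            erw [Sym2.mem_iff] at hv
            rcases hv with h | h <;> exact Sum.inr_ne_inl h
          · erw [aux_copyd_eq (hOdd1 i hi hp), aux_copyd_eq (hOdd2 i hi hp),
              Sym2.mem_iff] at hv
            have hji : j = i ∨ j = i + 1 := by
              rcases hv with h | h
              · refine Or.inl (hInj hj (by omega) ?_)
                rw [hgvj]
                exact congrArg Subtype.val (Sum.inr_injective h)
              · refine Or.inr (hInj hj (by omega) ?_)
                rw [hgvj]
                exact congrArg Subtype.val (Sum.inr_injective h)
            have : i = i₀ := by omega
            rw [this]
            try rfl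
          · exfalso
            erw [aux_copyd_eq (hnots a ha), Sym2.mem_iff] at hv
            rcases hv with h | h
            · exact Sum.inr_ne_inl h
            · have : u = a := congrArg Subtype.val (Sum.inr_injective h)
              exact ha (this ▸ hus)
      · refine ⟨s(Sum.inl u, copyd s t u),
          ⟨(aux_mem_matching _).mpr (Or.inr (Or.inr ⟨u, hus, rfl⟩)), ?_⟩, ?_⟩
        · erw [aux_copyd_eq hu, Sym2.mem_iff]
          exact Or.inr rfl
        · rintro e ⟨he, hv⟩
          rw [aux_mem_matching] at he
          rcases he with ⟨i, hi, hp, rfl⟩ | ⟨i, hi, hp, rfl⟩ | ⟨a, ha, rfl⟩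
          · exfalso
            erw [Sym2.mem_iff] at hv
            rcases hv with h | h <;> exact Sum.inr_ne_inl h
          · exfalso
            erw [aux_copyd_eq (hOdd1 i hi hp), aux_copyd_eq (hOdd2 i hi hp),
              Sym2.mem_iff] at hv
            rcases hv with h | h
            · have heq : u = Q.getVert i := congrArg Subtype.val (Sum.inr_injective h)
              have hm := hmem_gv i (by omega)
              rw [← heq] at hm
              exact hus hm
            · have heq : u = Q.getVert (i+1) := congrArg Subtype.val (Sum.inr_injective h)
              have hm := hmem_gv (i+1) (by omega)
              rw [← heq] at hm
              exact hus hm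
          · erw [aux_copyd_eq (hnots a ha), Sym2.mem_iff] at hv
            rcases hv with h | h
            · exact absurd h Sum.inr_ne_inl
            · have : u = a := congrArg Subtype.val (Sum.inr_injective h)
              rw [this, aux_copyd_eq (hnots a ha)]
              try rfl
  · -- weight
    have hmn : Q.edges.length = n := Q.length_edges
    set m := Q.edges.length with hm
    set gA : Fin m → Sym2 (Vd V s t) := fun i => Sym2.map Sum.inl (Q.edges.get i) with hgA
    set gB : Fin m → Sym2 (Vd V s t) := fun i => Sym2.map (copyd s t) (Q.edges.get i) with hgB
    set TA : Set (Fin m) := {i | Even (i : ℕ)} with hTA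
    set TB : Set (Fin m) := {i | Odd (i : ℕ)} with hTB
    set SC : Set (Sym2 (Vd V s t)) :=
      {e | ∃ u : V, u ∉ Q.support ∧ e = s(Sum.inl u, copyd s t u)} with hSC
    have hdecomp : matchingOfPath G s t Q = (gA '' TA ∪ gB '' TB) ∪ SC := by
      unfold matchingOfPath
      have h1 : (fun e => Sym2.map (Sum.inl : V → Vd V s t) e) ''
          {e | ∃ i : Fin Q.edges.length, Even (i : ℕ) ∧ Q.edges.get i = e} = gA '' TA := by
        ext e
        simp only [Set.mem_image, Set.mem_setOf_eq, hgA, hTA]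
        constructor
        · rintro ⟨e', ⟨i, hev, rfl⟩, rfl⟩
          exact ⟨i, hev, rfl⟩
        · rintro ⟨i, hev, rfl⟩
          exact ⟨Q.edges.get i, ⟨i, hev, rfl⟩, rfl⟩
      have h2 : (fun e => Sym2.map (copyd s t) e) ''
          {e | ∃ i : Fin Q.edges.length, Odd (i : ℕ) ∧ Q.edges.get i = e} = gB '' TB := by
        ext e
        simp only [Set.mem_image, Set.mem_setOf_eq, hgB, hTB]
        constructor
        · rintro ⟨e', ⟨i, hodd', rfl⟩, rfl⟩
          exact ⟨i, hodd', rfl⟩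
        · rintro ⟨i, hodd', rfl⟩
          exact ⟨Q.edges.get i, ⟨i, hodd', rfl⟩, rfl⟩
      erw [h1, h2]
    have hSC' : SC = (fun u : V => s(Sum.inl u, copyd s t u)) '' {u | u ∉ Q.support} := by
      ext e
      simp only [hSC, Set.mem_image, Set.mem_setOf_eq]
      constructor
      · rintro ⟨u, hu, rfl⟩
        exact ⟨u, hu, rfl⟩
      · rintro ⟨u, hu, rfl⟩
        exact ⟨u, hu, rfl⟩
    have hfinA : (gA '' TA).Finite := (Set.toFinite TA).image gA
    have hfinB : (gB '' TB).Finite := (Set.toFinite TB).image gB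
    have hfinC : SC.Finite := by
      rw [hSC']
      exact (Set.toFinite _).image _
    have hdAB : Disjoint (gA '' TA) (gB '' TB) := by
      rw [Set.disjoint_left]
      rintro e ⟨i, hi, rfl⟩ ⟨k, hk, hek⟩
      simp only [hgB, hgA, aux_edges_get Q k, aux_edges_get Q i, Sym2.map_pair_eq] at hek
      have hkodd : (k : ℕ) % 2 = 1 := Nat.odd_iff.mp hk
      have hklt : (k : ℕ) < n := hmn ▸ k.2
      rw [aux_copyd_eq (hOdd1 k hklt hkodd), aux_copyd_eq (hOdd2 k hklt hkodd)] at hek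
      erw [Sym2.map_pair_eq] at hek; erw [Sym2.eq_iff] at hek; rcases hek with ⟨h, _⟩ | ⟨h, _⟩ <;> exact Sum.inr_ne_inl h
    have hdC : Disjoint (gA '' TA ∪ gB '' TB) SC := by
      rw [Set.disjoint_left]
      rintro e (⟨i, hi, rfl⟩ | ⟨i, hi, rfl⟩) ⟨a, ha, heq⟩
      · simp only [hgA, aux_edges_get Q i, Sym2.map_pair_eq,
          aux_copyd_eq (hnots a ha)] at heq
        erw [Sym2.map_pair_eq] at heq; erw [Sym2.eq_iff] at heq; rcases heq with ⟨_, h⟩ | ⟨h, _⟩ <;> exact Sum.inl_ne_inr h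
      · have hiodd : (i : ℕ) % 2 = 1 := Nat.odd_iff.mp hi
        have hilt : (i : ℕ) < n := hmn ▸ i.2
        simp only [hgB, aux_edges_get Q i, Sym2.map_pair_eq, aux_copyd_eq (hnots a ha),
          aux_copyd_eq (hOdd1 i hilt hiodd), aux_copyd_eq (hOdd2 i hilt hiodd)] at heq
        erw [Sym2.eq_iff] at heq; rcases heq with ⟨h, _⟩ | ⟨_, h⟩ <;> exact Sum.inr_ne_inl h
    have hgetinj : Function.Injective (Q.edges.get) :=
      List.nodup_iff_injective_get.mp hQ.isTrail.edges_nodup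
    have hinjA : TA.InjOn gA := fun i _ k _ h =>
      hgetinj (Sym2.map.injective Sum.inl_injective h)
    have hinjB : TB.InjOn gB := fun i _ k _ h =>
      hgetinj (Sym2.map.injective (aux_copyd_inj s t) h)
    have hedge : ∀ i : Fin m, Q.edges.get i ∈ G.edgeSet :=
      fun i => Q.edges_subset_edgeSet (Q.edges.get_mem i)
    have hvalA : ∀ i : Fin m, doubledWeight w s t (gA i) = w (Q.edges.get i) := by
      intro i
      have hmap : Sym2.map (projd s t) (gA i) = Q.edges.get i := by
        show Sym2.map (projd s t) (Sym2.map Sum.inl (Q.edges.get i)) = _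
        erw [Sym2.map_map]
        show Sym2.map (projd s t ∘ Sum.inl) _ = _
        have : projd s t ∘ (Sum.inl : V → Vd V s t) = id := rfl
        rw [this, Sym2.map_id, id_eq]
      rw [doubledWeight, hmap, if_neg (G.not_isDiag_of_mem_edgeSet (hedge i))]
    have hvalB : ∀ i : Fin m, doubledWeight w s t (gB i) = w (Q.edges.get i) := by
      intro i
      have hmap : Sym2.map (projd s t) (gB i) = Q.edges.get i := by
        show Sym2.map (projd s t) (Sym2.map (copyd s t) (Q.edges.get i)) = _
        rw [Sym2.map_map]
        show Sym2.map (projd s t ∘ copyd s t) _ = _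
        rw [aux_projd_copyd, Sym2.map_id, id_eq]
      rw [doubledWeight, hmap, if_neg (G.not_isDiag_of_mem_edgeSet (hedge i))]
    have hCzero : ∑ᶠ e ∈ SC, doubledWeight w s t e = 0 := by
      apply finsum_mem_of_eqOn_zero
      rintro e ⟨a, ha, rfl⟩
      show doubledWeight w s t s(Sum.inl a, copyd s t a) = 0; unfold doubledWeight; rw [if_pos]; erw [Sym2.map_pair_eq, Sym2.mk_isDiag_iff]; exact (congrFun (aux_projd_copyd s t) a).symm
    rw [hdecomp, finsum_mem_union hdC (hfinA.union hfinB) hfinC, hCzero, add_zero,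
      finsum_mem_union hdAB hfinA hfinB, finsum_mem_image hinjA, finsum_mem_image hinjB]
    simp only [hvalA, hvalB]
    have hTAeq : TA = ↑(Finset.univ.filter (fun i : Fin m => Even (i : ℕ))) := by
      ext i; simp [hTA]
    have hTBeq : TB = ↑(Finset.univ.filter (fun i : Fin m => ¬ Even (i : ℕ))) := by
      ext i; simp [hTB, Nat.odd_iff, Nat.even_iff]
    rw [hTAeq, hTBeq, finsum_mem_coe_finset, finsum_mem_coe_finset,
      Finset.sum_filter_add_sum_filter_not]
    have hlist : Q.edges.map w = List.ofFn (fun i : Fin m => w (Q.edges.get i)) := by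
      conv_lhs => rw [← List.ofFn_get Q.edges, List.map_ofFn]
      rfl
    rw [walkWeight, hlist, List.sum_ofFn]
end

section
/- Let G be a graph with conservative weight function w, and let W be a walk from x to y that uses no negative-weight edge more than once. Then there exists a simple path P from x to y with E(P) ⊆ E(W) and w(P) ≤ w(W) (when x = y, P may be the empty path). -/
open SimpleGraph

lemma walkWeight_cons {V : Type*} (G : SimpleGraph V) (w : Sym2 V → ℝ) {u v t : V}
    (h : G.Adj u v) (p : G.Walk v t) :
    walkWeight G w (Walk.cons h p) = w s(u, v) + walkWeight G w p := by
  simp [walkWeight]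

lemma walkWeight_append {V : Type*} (G : SimpleGraph V) (w : Sym2 V → ℝ) {u v t : V}
    (p : G.Walk u v) (q : G.Walk v t) :
    walkWeight G w (p.append q) = walkWeight G w p + walkWeight G w q := by
  simp [walkWeight]

/-- A path from `u` to `v` containing the edge `s(u,v)` is the single-edge path. -/
lemma path_weight_of_mem_edge {V : Type*} (G : SimpleGraph V) (w : Sym2 V → ℝ) {u v : V}
    (p : G.Walk u v) (hp : p.IsPath) (he : s(u, v) ∈ p.edges) :
    walkWeight G w p = w s(u, v) := by
  cases p with
  | nil => simp at he
  | cons h q =>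
    rename_i b
    rw [Walk.edges_cons, List.mem_cons] at he
    rcases he with he | he
    · have hb : b = v := by
        rw [Sym2.eq_iff] at he
        rcases he with ⟨-, h2⟩ | ⟨h1, h2⟩
        · exact h2.symm
        · exact absurd h1 h.ne
      subst hb
      have : q = Walk.nil := (Walk.isPath_iff_eq_nil (p := q)).mp hp.of_cons
      subst this
      simp [walkWeight, ← he]
    · exfalso
      have := Walk.fst_mem_support_of_mem_edges q he
      exact ((Walk.cons_isPath_iff h q).mp hp).2 this

lemma aux_walk_to_path {V : Type*} [DecidableEq V]
    (G : SimpleGraph V) (w : Sym2 V → ℝ) (hw : Conservative G w) :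
    ∀ (n : ℕ) {x y : V} (W : G.Walk x y), W.length ≤ n →
    (∀ e ∈ W.edges, w e < 0 → W.edges.count e ≤ 1) →
    ∃ P : G.Walk x y, P.IsPath ∧ P.support ⊆ W.support ∧ (∀ e ∈ P.edges, e ∈ W.edges) ∧
      walkWeight G w P ≤ walkWeight G w W := by
  intro n
  induction n with
  | zero =>
    intro x y W hlen _
    cases W with
    | nil => exact ⟨Walk.nil, by simp, by simp, by simp, le_refl _⟩
    | cons h p => simp at hlen
  | succ n ih =>
    intro x y W hlen hneg
    cases W with
    | nil => exact ⟨Walk.nil, by simp, by simp, by simp, le_refl _⟩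
    | cons h p =>
      rename_i a
      -- h : G.Adj x a, p : G.Walk a y
      have hplen : p.length ≤ n := by
        rw [Walk.length_cons] at hlen; omega
      have hpsub : p.edges.Sublist (Walk.cons h p).edges := by
        rw [Walk.edges_cons]; exact List.sublist_cons_self _ _
      have hpneg : ∀ e ∈ p.edges, w e < 0 → p.edges.count e ≤ 1 := by
        intro e he hlt
        exact le_trans (hpsub.count_le e) (hneg e (hpsub.subset he) hlt)
      by_cases hx : x ∈ p.support
      · -- x reappears: split p = q ++ r at the first occurrence of x
        set q := p.takeUntil x hx with hq
        set r := p.dropUntil x hx with hr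
        have hspec : q.append r = p := p.take_spec hx
        have hlenqr : q.length + r.length = p.length := by
          have := congrArg Walk.length hspec
          simpa [Walk.length_append] using this
        have hWedges : (Walk.cons h p).edges = s(x, a) :: (q.edges ++ r.edges) := by
          rw [Walk.edges_cons, ← hspec, Walk.edges_append]
        rcases Nat.eq_zero_or_pos r.length with hr0 | hrpos
        · -- r is nil: y = x, W is a closed walk returning to x only at the end
          have hxy : x = y := (Walk.eq_of_length_eq_zero hr0)
          subst hxy
          -- apply IH to p : G.Walk a x
          obtain ⟨P', hP'path, hP'supp, hP'edges, hP'w⟩ := ih p hplen hpneg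
          refine ⟨Walk.nil, by simp, by simp, by simp, ?_⟩
          have h0 : walkWeight G w (Walk.nil : G.Walk x x) = 0 := by simp [walkWeight]
          rw [h0, walkWeight_cons]
          by_cases he : s(x, a) ∈ P'.edges
          · -- the edge x-a is used again: it must be nonnegative
            have hcount : 2 ≤ (Walk.cons h p).edges.count s(x, a) := by
              rw [Walk.edges_cons, List.count_cons_self]
              have : s(x, a) ∈ p.edges := hP'edges _ he
              have := List.count_pos_iff.mpr this
              omega
            have hwe : 0 ≤ w s(x, a) := by
              by_contra hc
              have := hneg s(x, a) (by rw [Walk.edges_cons]; exact List.mem_cons_self)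
                (lt_of_not_ge hc)
              omega
            have he' : s(a, x) ∈ P'.edges := by rwa [Sym2.eq_swap]
            have hwP' : walkWeight G w P' = w s(x, a) := by
              rw [path_weight_of_mem_edge G w P' hP'path he', Sym2.eq_swap]
            nlinarith [hP'w]
          · -- cons h P' is a cycle
            have hcyc : (Walk.cons h P').IsCycle :=
              (Walk.cons_isCycle_iff P' h).mpr ⟨hP'path, he⟩
            have := hw x (Walk.cons h P') hcyc
            rw [walkWeight_cons] at this
            linarith [hP'w]
        · -- r is not nil: W = (cons h q) ++ r, cons h q is a shorter closed walk
          have hrsub : r.edges.Sublist (Walk.cons h p).edges := by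
            rw [hWedges]
            exact ((q.edges.sublist_append_right r.edges).trans
              (List.sublist_cons_self _ _))
          have hBsub : (Walk.cons h q).edges.Sublist (Walk.cons h p).edges := by
            rw [hWedges, Walk.edges_cons]
            exact List.Sublist.cons₂ _ (q.edges.sublist_append_left r.edges)
          have hrneg : ∀ e ∈ r.edges, w e < 0 → r.edges.count e ≤ 1 := fun e he hlt =>
            le_trans (hrsub.count_le e) (hneg e (hrsub.subset he) hlt)
          have hBneg : ∀ e ∈ (Walk.cons h q).edges, w e < 0 →
              (Walk.cons h q).edges.count e ≤ 1 := fun e he hlt =>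
            le_trans (hBsub.count_le e) (hneg e (hBsub.subset he) hlt)
          have hrlen : r.length ≤ n := by omega
          have hBlen : (Walk.cons h q).length ≤ n := by
            rw [Walk.length_cons]; omega
          obtain ⟨P, hPpath, hPsupp, hPedges, hPw⟩ := ih r hrlen hrneg
          obtain ⟨PB, hPBpath, _, _, hPBw⟩ := ih (Walk.cons h q) hBlen hBneg
          have hPBnil : PB = Walk.nil := (Walk.isPath_iff_eq_nil (p := PB)).mp hPBpath
          have hB0 : (0 : ℝ) ≤ walkWeight G w (Walk.cons h q) := by
            rw [hPBnil] at hPBw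
            simpa [walkWeight] using hPBw
          refine ⟨P, hPpath, ?_, ?_, ?_⟩
          · intro v hv
            have : v ∈ r.support := hPsupp hv
            have := p.support_dropUntil_subset hx this
            rw [Walk.support_cons]
            exact List.mem_cons_of_mem _ this
          · intro e he
            exact hrsub.subset (hPedges e he)
          · have : walkWeight G w (Walk.cons h p) =
                walkWeight G w (Walk.cons h q) + walkWeight G w r := by
              rw [walkWeight_cons, ← hspec, walkWeight_append, walkWeight_cons]
              ring
            rw [this]
            linarith
      · -- x does not reappear: recurse on p and prepend the edge
        obtain ⟨P', hP'path, hP'supp, hP'edges, hP'w⟩ := ih p hplen hpneg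
        refine ⟨Walk.cons h P', ?_, ?_, ?_, ?_⟩
        · rw [Walk.cons_isPath_iff]
          exact ⟨hP'path, fun hc => hx (hP'supp hc)⟩
        · rw [Walk.support_cons, Walk.support_cons]
          exact List.cons_subset_cons _ hP'supp
        · intro e he
          rw [Walk.edges_cons] at he ⊢
          rcases List.mem_cons.mp he with he | he
          · rw [he]; exact List.mem_cons_self
          · exact List.mem_cons_of_mem _ (hP'edges e he)
        · rw [walkWeight_cons, walkWeight_cons]
          linarith

/-- If `W` is a walk from `x` to `y` using no negative-weight edge more than once in a
graph with conservative weights, then there is a simple path from `x` to `y` using only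
edges of `W` whose weight is at most that of `W`. -/
theorem walk_to_path_weight_le {V : Type*} [DecidableEq V]
    (G : SimpleGraph V) (w : Sym2 V → ℝ) (hw : Conservative G w)
    {x y : V} (W : G.Walk x y)
    (hneg : ∀ e ∈ W.edges, w e < 0 → W.edges.count e ≤ 1) :
    ∃ P : G.Walk x y, P.IsPath ∧ (∀ e ∈ P.edges, e ∈ W.edges) ∧
      walkWeight G w P ≤ walkWeight G w W := by
  obtain ⟨P, hPpath, _, hPedges, hPw⟩ :=
    aux_walk_to_path G w hw W.length W le_rfl hneg
  exact ⟨P, hPpath, hPedges, hPw⟩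
end
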